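/- Let S be a countable subset of [0,∞) with 0 ∈ S, and let X be a countably infinite discrete topological space. Then there exists a metric d ∈ Met(X) that is T(S)-universal, i.e., for every s ∈ S there exist x, y ∈ X with d(x,y) = s. -/

import Mathlib

/-!
Give every point `x` a positive weight `w x` and put `d(x, y) = w x + w y` for `x ≠ y`. This is
a metric, and the ball of radius `w x` about `x` is `{x}`, so it generates the discrete topology.
Writing `X ≃ ℕ × Bool` and enumerating the positive values of `S` as `g 0, g 1, …`, the weight
`w (n, b) = g n / 2` makes the two points over `n` lie at distance `g n`.
-/

open Set
open scoped ENNReal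

/-- The space `Met(X)` of metrics generating the topology of `X`. -/
def MetricCompat (X : Type*) [t : TopologicalSpace X] : Type _ :=
  { m : MetricSpace X // m.toUniformSpace.toTopologicalSpace = t }

namespace MetricCompat

variable {X : Type*} [TopologicalSpace X]

/-- The distance function of an element of `Met(X)`. -/
noncomputable def dist (d : MetricCompat X) (x y : X) : ℝ := d.1.dist x y

/-- The supremum distance `D_X`, valued in `[0,∞]`. -/
noncomputable def supDist (d e : MetricCompat X) : ℝ≥0∞ :=
  ⨆ p : X × X, ENNReal.ofReal |d.dist p.1 p.2 - e.dist p.1 p.2|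

/-- The topology on `Met(X)` induced by the open balls of `D_X`. -/
noncomputable instance : TopologicalSpace (MetricCompat X) :=
  TopologicalSpace.generateFrom
    { U | ∃ (d : MetricCompat X) (r : ℝ≥0∞), 0 < r ∧ U = { e | supDist d e < r } }

end MetricCompat

/-- A space is strongly `0`-dimensional if disjoint closed sets are separated by a clopen set. -/
def StronglyZeroDim (X : Type*) [TopologicalSpace X] : Prop :=
  ∀ A B : Set X, IsClosed A → IsClosed B → Disjoint A B →
    ∃ V : Set X, IsClopen V ∧ A ⊆ V ∧ Disjoint V B

section WeightedDist

variable {X : Type*}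

noncomputable def weightedDist [DecidableEq X] (w : X → ℝ) (x y : X) : ℝ :=
  if x = y then 0 else w x + w y

variable [DecidableEq X] {w : X → ℝ}

@[simp]
lemma weightedDist_self (w : X → ℝ) (x : X) : weightedDist w x x = 0 := if_pos rfl

lemma weightedDist_of_ne {x y : X} (h : x ≠ y) : weightedDist w x y = w x + w y := if_neg h

lemma weightedDist_comm (w : X → ℝ) (x y : X) : weightedDist w x y = weightedDist w y x := by
  by_cases h : x = y
  · simp [h]
  · rw [weightedDist_of_ne h, weightedDist_of_ne (Ne.symm h), add_comm]

lemma weightedDist_nonneg (hw : ∀ x, 0 < w x) (x y : X) : 0 ≤ weightedDist w x y := by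
  by_cases h : x = y
  · simp [h]
  · rw [weightedDist_of_ne h]
    exact add_nonneg (hw x).le (hw y).le

lemma weightedDist_triangle (hw : ∀ x, 0 < w x) (x y z : X) :
    weightedDist w x z ≤ weightedDist w x y + weightedDist w y z := by
  by_cases hxz : x = z
  · rw [hxz, weightedDist_self]
    exact add_nonneg (weightedDist_nonneg hw _ _) (weightedDist_nonneg hw _ _)
  by_cases hxy : x = y
  · simp [hxy]
  by_cases hyz : y = z
  · simp [hyz]
  rw [weightedDist_of_ne hxz, weightedDist_of_ne hxy, weightedDist_of_ne hyz]
  linarith [hw y]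

lemma eq_of_weightedDist_eq_zero (hw : ∀ x, 0 < w x) {x y : X} (h : weightedDist w x y = 0) :
    x = y := by
  by_contra hxy
  rw [weightedDist_of_ne hxy] at h
  linarith [hw x, hw y]

lemma eq_of_weightedDist_lt (hw : ∀ x, 0 < w x) {x y : X} (h : weightedDist w x y < w x) :
    x = y := by
  by_contra hxy
  rw [weightedDist_of_ne hxy] at h
  linarith [hw y]

end WeightedDist

namespace MetricCompat

variable {X : Type*} [TopologicalSpace X]

lemma dist_self (d : MetricCompat X) (x : X) : d.dist x x = 0 :=
  @_root_.dist_self X d.1.toPseudoMetricSpace x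

variable [DiscreteTopology X]

open Classical in
noncomputable def ofWeights (w : X → ℝ) (hw : ∀ x, 0 < w x) : MetricCompat X :=
  ⟨MetricSpace.ofDistTopology (weightedDist w) (weightedDist_self w) (weightedDist_comm w)
    (weightedDist_triangle hw)
    (fun s ↦ ⟨fun _ x hx ↦ ⟨w x, hw x, fun _ hy ↦ eq_of_weightedDist_lt hw hy ▸ hx⟩,
      fun _ ↦ isOpen_discrete s⟩)
    (fun _ _ ↦ eq_of_weightedDist_eq_zero hw), rfl⟩

lemma dist_ofWeights_of_ne {w : X → ℝ} (hw : ∀ x, 0 < w x) {x y : X} (h : x ≠ y) :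
    (ofWeights w hw).dist x y = w x + w y := by
  classical
  exact weightedDist_of_ne h

lemma exists_dist_eq_of_pos [Countable X] [Infinite X] (g : ℕ → ℝ) (hg : ∀ n, 0 < g n) :
    ∃ d : MetricCompat X, ∀ n, ∃ x y : X, d.dist x y = g n := by
  obtain ⟨e⟩ : Nonempty (X ≃ ℕ × Bool) := nonempty_equiv_of_countable
  have hw : ∀ x, 0 < g (e x).1 / 2 := fun x ↦ half_pos (hg _)
  refine ⟨ofWeights _ hw, fun n ↦ ⟨e.symm (n, false), e.symm (n, true), ?_⟩⟩
  rw [dist_ofWeights_of_ne hw (by simp)]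
  simp only [Equiv.apply_symm_apply]
  ring

end MetricCompat

lemma Set.Countable.exists_pos_seq_superset {S : Set ℝ} (hS : S.Countable) (hpos : S ⊆ Ioi 0) :
    ∃ g : ℕ → ℝ, (∀ n, 0 < g n) ∧ S ⊆ range g := by
  obtain ⟨g, hg⟩ := (hS.insert 1).exists_eq_range (insert_nonempty 1 S)
  refine ⟨g, fun n ↦ ?_, hg ▸ subset_insert 1 S⟩
  have hn : g n ∈ insert 1 S := hg ▸ mem_range_self n
  rcases hn with h | h
  · rw [h]; exact one_pos
  · exact hpos h

theorem countable_discrete_has_TS_universal_metric_general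
    (S : Set ℝ) (hScount : S.Countable) (hSsub : S ⊆ Set.Ici 0)
    {X : Type*} [TopologicalSpace X] [DiscreteTopology X] [Countable X] [Infinite X] :
    ∃ d : MetricCompat X, ∀ s ∈ S, ∃ x y : X, d.dist x y = s := by
  have hpos : S \ {0} ⊆ Ioi 0 := fun s ⟨hs, hs0⟩ ↦ (hSsub hs).lt_of_ne (Ne.symm hs0)
  obtain ⟨g, hg, hSg⟩ := (hScount.mono sdiff_subset).exists_pos_seq_superset hpos
  obtain ⟨d, hd⟩ := MetricCompat.exists_dist_eq_of_pos (X := X) g hg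
  refine ⟨d, fun s hs ↦ ?_⟩
  by_cases hs0 : s = 0
  · obtain ⟨x⟩ := ‹Infinite X›.nonempty
    exact ⟨x, x, hs0 ▸ d.dist_self x⟩
  · obtain ⟨n, rfl⟩ := hSg ⟨hs, hs0⟩
    exact hd n

/-- Proposition 3.8: for a countable subset `S` of `[0,∞)` containing `0` and a countably
infinite discrete space `X`, there is a `T(S)`-universal metric in `Met(X)`, i.e. a metric
realizing every value in `S`. -/
theorem countable_discrete_has_TS_universal_metric
    (S : Set ℝ) (hScount : S.Countable) (hSsub : S ⊆ Set.Ici 0) (hS0 : (0 : ℝ) ∈ S)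
    {X : Type*} [TopologicalSpace X] [DiscreteTopology X] [Countable X] [Infinite X] :
    ∃ d : MetricCompat X, ∀ s ∈ S, ∃ x y : X, d.dist x y = s :=
  countable_discrete_has_TS_universal_metric_general S hScount hSsub
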